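/- arXiv:2309.01746 — 5 statements merged into one kernel-verified Lean document; each statement's English description precedes it below -/
import Mathlib

section
/- Let K be a field equipped with a valuation v : K → ℝ≥0, and let R be a commutative K-algebra generated as a K-algebra by finitely many elements T₁, …, Tₙ. If the set { (w(T₁), …, w(Tₙ)) ∈ (ℝ≥0)ⁿ : w is a valuation on R (in the sense of Mathlib's Valuation R ℝ≥0) satisfying w(algebraMap K R c) = v(c) for all c ∈ K } is finite, then the set of K-algebra homomorphisms R → K is finite. -/
/-!
If every generator is integral over `K`, then `R` is a finite `K`-algebra, which has only finitely
many `K`-algebra maps to `K`. Otherwise some generator `y` is transcendental, and for every `r > 0`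
there is a valuation on `R` extending `v` with `w y = r`, so the tropicalization is infinite.

To build `w`, take the Gauss valuation of radius `r` on `K[X]`, extend it to `K(X)`, and then to
the residue field `L` of a maximal ideal of `R` localized at the nonzero polynomials in `y`; by
Zariski's lemma `L` is finite over `K(X)`. Chevalley's theorem extends the valuation to `L` up to
equivalence, with values in an abstract group. Since `L / K(X)` is algebraic, every value on `L`
has a power `u z ^ m = u f` with `f ∈ K(X)`, and `z ↦ G(f) ^ (1 / m)` is a real-valued valuation
on `L` restricting exactly to the valuation `G` on `K(X)`.
-/

open scoped NNReal
open Polynomial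

namespace Valuation

variable {K : Type*} [Field K] (v : Valuation K ℝ≥0)

noncomputable def toAbsoluteValue : AbsoluteValue K ℝ where
  toFun x := v x
  map_mul' x y := by simp
  nonneg' x := (v x).coe_nonneg
  eq_zero' x := by simp
  add_le' x y := by
    have h : v (x + y) ≤ v x + v y := (v.map_add x y).trans (max_le le_self_add le_add_self)
    exact_mod_cast h

theorem isNonarchimedean_toAbsoluteValue : IsNonarchimedean v.toAbsoluteValue := fun x y => by
  change ((v (x + y) : ℝ≥0) : ℝ) ≤ max ((v x : ℝ≥0) : ℝ) (v y)
  exact_mod_cast v.map_add x y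

end Valuation

namespace Polynomial

variable {K : Type*} [Field K] (v : Valuation K ℝ≥0) {r : ℝ≥0}

noncomputable def gaussValuation (hr : 0 < r) : Valuation K[X] ℝ≥0 where
  toFun p := .mk (p.gaussNorm v.toAbsoluteValue r) (p.gaussNorm_nonneg _ r.coe_nonneg)
  map_zero' := NNReal.eq (gaussNorm_zero (R := K) v.toAbsoluteValue r)
  map_one' := NNReal.eq (by simpa using gaussNorm_C v.toAbsoluteValue (r : ℝ) (1 : K))
  map_mul' p q := NNReal.eq (gaussNorm_mul v.isNonarchimedean_toAbsoluteValue hr p q)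
  map_add_le_max' p q := NNReal.coe_le_coe.mp
    (isNonarchimedean_gaussNorm _ v.isNonarchimedean_toAbsoluteValue r.coe_nonneg p q)

variable (hr : 0 < r)

theorem coe_gaussValuation (p : K[X]) :
    (gaussValuation v hr p : ℝ) = p.gaussNorm v.toAbsoluteValue r := rfl

@[simp]
theorem gaussValuation_C (c : K) : gaussValuation v hr (C c) = v c :=
  NNReal.eq (gaussNorm_C _ _ c)

@[simp]
theorem gaussValuation_X : gaussValuation v hr X = r := NNReal.eq <| by
  rw [coe_gaussValuation, ← monomial_one_one_eq_X, gaussNorm_monomial]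
  simp [Valuation.toAbsoluteValue]

theorem gaussValuation_eq_zero_iff {p : K[X]} : gaussValuation v hr p = 0 ↔ p = 0 := by
  rw [← NNReal.coe_eq_zero, coe_gaussValuation]
  exact gaussNorm_eq_zero_iff _ p (fun x => v.toAbsoluteValue.eq_zero.mp) hr

end Polynomial

namespace Valuation

section Torsion

variable {L Γ : Type*} [Field L] [LinearOrderedCommGroupWithZero Γ] (u : Valuation L Γ)

theorem exists_lt_map_eq_of_sum_eq_zero {ι : Type*} [LinearOrder ι] {s : Finset ι} {f : ι → L}
    (hs : s.Nonempty) (hf : ∀ i ∈ s, f i ≠ 0) (hsum : ∑ i ∈ s, f i = 0) :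
    ∃ i ∈ s, ∃ j ∈ s, i < j ∧ u (f i) = u (f j) := by
  classical
  obtain ⟨j, hj, hmax⟩ := s.exists_max_image (fun i => u (f i)) hs
  by_contra! hne
  have hlt : ∀ i ∈ s \ {j}, u (f i) < u (f j) := fun i hi => by
    obtain ⟨his, hij⟩ := Finset.mem_sdiff.mp hi
    refine (hmax i his).lt_of_ne fun h => ?_
    rcases (show i ≠ j by simpa using hij).lt_or_gt with h' | h'
    · exact hne i his j hj h' h
    · exact hne j hj i his h' h.symm
  have hj0 := u.map_sum_eq_of_lt hj hlt
  rw [hsum, map_zero, eq_comm, zero_iff] at hj0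
  exact hf j hj hj0

/-- Two terms of `minpoly F z` evaluated at `z` have the same value; comparing them gives the
power of `u z` in the value group of `F`. -/
theorem exists_pow_eq_map_algebraMap {F : Type*} [Field F] [Algebra F L] {z : L}
    (hz : IsIntegral F z) : ∃ m : ℕ, ∃ f : F, 0 < m ∧ u z ^ m = u (algebraMap F L f) := by
  rcases eq_or_ne z 0 with rfl | hz0
  · exact ⟨1, 0, one_pos, by simp⟩
  set q := minpoly F z
  have hterm : ∀ k ∈ q.support, algebraMap F L (q.coeff k) * z ^ k ≠ 0 := fun k hk =>
    mul_ne_zero ((_root_.map_ne_zero _).mpr (mem_support_iff.mp hk)) (pow_ne_zero _ hz0)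
  have hsum : ∑ k ∈ q.support, algebraMap F L (q.coeff k) * z ^ k = 0 := by
    simpa [aeval_def, eval₂_eq_sum, Polynomial.sum_def] using minpoly.aeval F z
  obtain ⟨i, hi, j, hj, hij, heq⟩ := u.exists_lt_map_eq_of_sum_eq_zero
    (support_nonempty.mpr (minpoly.ne_zero hz)) hterm hsum
  obtain ⟨m, hm, rfl⟩ : ∃ m, 0 < m ∧ j = i + m := ⟨j - i, by omega, by omega⟩
  have hqj : u (algebraMap F L (q.coeff (i + m))) ≠ 0 := by
    simpa using mem_support_iff.mp hj
  refine ⟨m, q.coeff i / q.coeff (i + m), hm, ?_⟩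
  rw [map_div₀, map_div₀, eq_div_iff hqj]
  refine mul_right_cancel₀ (pow_ne_zero i ((u.ne_zero_iff).mpr hz0)) ?_
  simp only [map_mul, map_pow] at heq
  rw [heq, pow_add]
  ac_rfl

end Torsion

section RootExtension

variable {F L Γ : Type*} [Field F] [Field L] [Algebra F L] [Algebra.IsIntegral F L]
  [LinearOrderedCommGroupWithZero Γ] (G : Valuation F ℝ≥0) (u : Valuation L Γ)

theorem exists_pow_eq_map_algebraMap₂ (x y : L) : ∃ N : ℕ, ∃ f g : F,
    0 < N ∧ u x ^ N = u (algebraMap F L f) ∧ u y ^ N = u (algebraMap F L g) := by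
  obtain ⟨m, f, hm, hx⟩ :=
    u.exists_pow_eq_map_algebraMap (Algebra.IsIntegral.isIntegral (R := F) x)
  obtain ⟨n, g, hn, hy⟩ :=
    u.exists_pow_eq_map_algebraMap (Algebra.IsIntegral.isIntegral (R := F) y)
  refine ⟨m * n, f ^ n, g ^ m, Nat.mul_pos hm hn, ?_, ?_⟩
  · rw [pow_mul, hx, map_pow, map_pow]
  · rw [pow_mul', hy, map_pow, map_pow]

/-- `(G f) ^ (1 / m)` for a chosen `m > 0` and `f : F` with `u z ^ m = u f`. -/
noncomputable def rootExtensionFun (z : L) : ℝ≥0 :=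
  have h := u.exists_pow_eq_map_algebraMap (Algebra.IsIntegral.isIntegral (R := F) z)
  G h.choose_spec.choose ^ (h.choose : ℝ)⁻¹

theorem exists_rootExtensionFun_pow_eq (z : L) : ∃ m : ℕ, ∃ f : F,
    0 < m ∧ u z ^ m = u (algebraMap F L f) ∧ rootExtensionFun G u z ^ m = G f := by
  have h := u.exists_pow_eq_map_algebraMap (Algebra.IsIntegral.isIntegral (R := F) z)
  obtain ⟨hm, hz⟩ := h.choose_spec.choose_spec
  exact ⟨_, _, hm, hz, NNReal.rpow_inv_natCast_pow _ hm.ne'⟩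

variable {G u} (hGu : G.IsEquiv (u.comap (algebraMap F L)))
include hGu

theorem rootExtensionFun_pow_eq {z : L} {m : ℕ} {f : F} (hz : u z ^ m = u (algebraMap F L f)) :
    rootExtensionFun G u z ^ m = G f := by
  obtain ⟨m₀, f₀, hm₀, hz₀, hpow⟩ := exists_rootExtensionFun_pow_eq G u z
  have hG : G (f₀ ^ m) = G (f ^ m₀) := by
    refine hGu.eq_iff.mpr ?_
    simp only [comap_apply, map_pow, ← hz, ← hz₀, ← pow_mul, mul_comm m m₀]
  refine (pow_left_inj₀ zero_le zero_le hm₀.ne').mp ?_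
  rw [← pow_mul, mul_comm, pow_mul, hpow, ← map_pow, hG, map_pow]

theorem rootExtensionFun_mul (x y : L) :
    rootExtensionFun G u (x * y) = rootExtensionFun G u x * rootExtensionFun G u y := by
  obtain ⟨N, f, g, hN, hx, hy⟩ := u.exists_pow_eq_map_algebraMap₂ (F := F) x y
  have hxy : u (x * y) ^ N = u (algebraMap F L (f * g)) := by
    rw [map_mul, mul_pow, hx, hy, map_mul, map_mul]
  refine (pow_left_inj₀ zero_le zero_le hN.ne').mp ?_
  rw [mul_pow, rootExtensionFun_pow_eq hGu hxy, rootExtensionFun_pow_eq hGu hx,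
    rootExtensionFun_pow_eq hGu hy, map_mul]

theorem rootExtensionFun_le_of_le {x y : L} (h : u x ≤ u y) :
    rootExtensionFun G u x ≤ rootExtensionFun G u y := by
  obtain ⟨N, f, g, hN, hx, hy⟩ := u.exists_pow_eq_map_algebraMap₂ (F := F) x y
  refine (pow_le_pow_iff_left₀ zero_le zero_le hN.ne').mp ?_
  rw [rootExtensionFun_pow_eq hGu hx, rootExtensionFun_pow_eq hGu hy]
  refine hGu.le_iff_le.mpr ?_
  simpa only [comap_apply, ← hx, ← hy] using pow_le_pow_left' h N

theorem rootExtensionFun_algebraMap (f : F) : rootExtensionFun G u (algebraMap F L f) = G f := by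
  simpa using rootExtensionFun_pow_eq hGu (m := 1) (pow_one _)

noncomputable def rootExtension : Valuation L ℝ≥0 where
  toFun := rootExtensionFun G u
  map_zero' := by simpa using rootExtensionFun_algebraMap hGu 0
  map_one' := by simpa using rootExtensionFun_algebraMap hGu 1
  map_mul' := rootExtensionFun_mul hGu
  map_add_le_max' x y := by
    rcases le_max_iff.mp (u.map_add x y) with h | h
    · exact le_max_of_le_left (rootExtensionFun_le_of_le hGu h)
    · exact le_max_of_le_right (rootExtensionFun_le_of_le hGu h)

theorem comap_rootExtension : (rootExtension hGu).comap (algebraMap F L) = G :=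
  Valuation.ext (rootExtensionFun_algebraMap hGu)

end RootExtension

theorem exists_valuationSubring_isEquiv_comap {F L Γ : Type*} [Field F] [Field L]
    [LinearOrderedCommGroupWithZero Γ] (G : Valuation F Γ) (φ : F →+* L) :
    ∃ A : ValuationSubring L, G.IsEquiv (A.valuation.comap φ) := by
  obtain ⟨A, hA, hloc⟩ :=
    IsLocalRing.exists_factor_valuationRing (φ.comp G.valuationSubring.subtype)
  refine ⟨A, isEquiv_iff_val_le_one.mpr fun {x} => ⟨fun hx => ?_, fun hx => ?_⟩⟩
  · exact (A.valuation_le_one_iff _).mpr (hA ⟨x, hx⟩)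
  by_contra! hGx
  have hx0 : x ≠ 0 := by rintro rfl; simp at hGx
  have hinv : x⁻¹ ∈ G.valuationSubring := by
    rw [mem_valuationSubring_iff, map_inv₀]
    exact inv_le_one_of_one_le₀ hGx.le
  -- `φ x⁻¹` is a unit of `A` with inverse `φ x`, and the map into `A` is local.
  have hunit : IsUnit (⟨x⁻¹, hinv⟩ : G.valuationSubring) := by
    refine hloc.map_nonunit _
      (isUnit_iff_exists_inv.mpr ⟨⟨φ x, (A.valuation_le_one_iff _).mp hx⟩, ?_⟩)
    ext
    simp [hx0]
  obtain ⟨⟨y, hy⟩, hxy⟩ := isUnit_iff_exists_inv.mp hunit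
  obtain rfl : y = x := by
    simpa [inv_mul_eq_one₀ hx0, eq_comm] using congrArg Subtype.val hxy
  exact hGx.not_ge hy

theorem exists_comap_eq_of_isIntegral {F L : Type*} [Field F] [Field L] [Algebra F L]
    [Algebra.IsIntegral F L] (G : Valuation F ℝ≥0) :
    ∃ W : Valuation L ℝ≥0, W.comap (algebraMap F L) = G := by
  obtain ⟨A, hA⟩ := G.exists_valuationSubring_isEquiv_comap (algebraMap F L)
  exact ⟨rootExtension hA, comap_rootExtension hA⟩

end Valuation

theorem Algebra.FiniteType.of_forall_eq_mul_algebraMap {K R F L : Type*} [CommRing K]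
    [CommRing R] [Algebra K R] [Algebra.FiniteType K R] [CommRing F] [CommRing L] [Algebra F L]
    (κ : R →+* L) (hK : ∀ c : K, κ (algebraMap K R c) ∈ (algebraMap F L).range)
    (hL : ∀ z : L, ∃ a : R, ∃ b : F, z = κ a * algebraMap F L b) :
    Algebra.FiniteType F L := by
  classical
  obtain ⟨s, hs⟩ := Algebra.FiniteType.out (R := K) (A := R)
  refine ⟨s.image κ, Algebra.eq_top_iff.mpr fun z => ?_⟩
  set B := Algebra.adjoin F (s.image κ : Set L)
  have hR : ∀ a : R, κ a ∈ B := by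
    suffices (Algebra.adjoin K (s : Set R)).toSubring ≤ B.toSubring.comap κ from
      fun a => this (hs ▸ Algebra.mem_top : a ∈ Algebra.adjoin K (s : Set R))
    rw [Algebra.adjoin_eq_ring_closure, Subring.closure_le]
    rintro _ (⟨c, rfl⟩ | ha)
    · obtain ⟨b, hb⟩ := hK c
      change κ (algebraMap K R c) ∈ B
      exact hb ▸ B.algebraMap_mem b
    · exact Algebra.subset_adjoin (by simpa using ⟨_, ha, rfl⟩)
  obtain ⟨a, b, rfl⟩ := hL z
  exact B.mul_mem (hR a) (B.algebraMap_mem b)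

section Transcendental

variable {K R : Type*} [Field K] [CommRing R] [Algebra K R] [Algebra.FiniteType K R] {y : R}

theorem Transcendental.exists_valuation_aeval_eq (hy : Transcendental K y)
    (g : Valuation K[X] ℝ≥0) (hg : ∀ p, g p = 0 → p = 0) :
    ∃ w : Valuation R ℝ≥0, ∀ p : K[X], w (Polynomial.aeval y p) = g p := by
  set φ : K[X] →+* R := (Polynomial.aeval y).toRingHom
  set S := (nonZeroDivisors K[X]).map φ
  have hS : (0 : R) ∉ S := by
    rintro ⟨p, hp, hp0⟩
    exact nonZeroDivisors.ne_zero hp (transcendental_iff.mp hy p hp0)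
  let A := Localization S
  have : Nontrivial A := not_subsingleton_iff_nontrivial.mp
    fun h => hS ((IsLocalization.subsingleton_iff (M := S) (S := A)).mp h)
  obtain ⟨M, hM⟩ := Ideal.exists_maximal A
  let : Field (A ⧸ M) := Ideal.Quotient.field M
  let κ : R →+* A ⧸ M := (Ideal.Quotient.mk M).comp (algebraMap R A)
  have hunit (q : nonZeroDivisors K[X]) : IsUnit (κ.comp φ q) :=
    (IsLocalization.map_units A ⟨φ q, Submonoid.mem_map_of_mem _ q.2⟩).map
      (Ideal.Quotient.mk M)
  let ι : FractionRing K[X] →+* A ⧸ M := IsLocalization.lift hunit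
  have hι (p : K[X]) : ι (algebraMap K[X] _ p) = κ (φ p) := IsLocalization.lift_eq hunit p
  let : Algebra (FractionRing K[X]) (A ⧸ M) := ι.toAlgebra
  -- Every element of `A ⧸ M` is `κ a / κ (φ q)` with `q ≠ 0`.
  have : Algebra.FiniteType (FractionRing K[X]) (A ⧸ M) := by
    refine .of_forall_eq_mul_algebraMap (K := K) κ (fun c => ⟨algebraMap _ _ (C c), ?_⟩)
      fun z => ?_
    · exact (hι (C c)).trans (by simp [φ])
    obtain ⟨ξ, rfl⟩ := Ideal.Quotient.mk_surjective z
    obtain ⟨⟨a, t⟩, rfl⟩ := IsLocalization.mk'_surjective S ξ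
    obtain ⟨q, hq, hqt⟩ := t.2
    have hκt : κ t ≠ 0 := hqt ▸ (hunit ⟨q, hq⟩).ne_zero
    refine ⟨a, (algebraMap K[X] _ q)⁻¹, ?_⟩
    rw [RingHom.algebraMap_toAlgebra, map_inv₀, hι, hqt, eq_mul_inv_iff_mul_eq₀ hκt]
    exact (map_mul _ _ _).symm.trans (congrArg _ (IsLocalization.mk'_spec A a t))
  have : Algebra.IsIntegral (FractionRing K[X]) (A ⧸ M) := by
    have := finite_of_finite_type_of_isJacobsonRing (FractionRing K[X]) (A ⧸ M)
    infer_instance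
  have hsupp : nonZeroDivisors K[X] ≤ g.supp.primeCompl := fun p hp =>
    mt (hg p) (nonZeroDivisors.ne_zero hp)
  obtain ⟨W, hW⟩ :=
    (g.extendToLocalization hsupp (FractionRing K[X])).exists_comap_eq_of_isIntegral (L := A ⧸ M)
  refine ⟨W.comap κ, fun p => ?_⟩
  change W (κ (φ p)) = g p
  rw [← hι, ← RingHom.algebraMap_toAlgebra ι, ← Valuation.comap_apply, hW,
    Valuation.extendToLocalization_apply_map_apply]

theorem Transcendental.exists_valuation_extension_eq (hy : Transcendental K y)
    (v : Valuation K ℝ≥0) {r : ℝ≥0} (hr : 0 < r) :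
    ∃ w : Valuation R ℝ≥0, (∀ c : K, w (algebraMap K R c) = v c) ∧ w y = r := by
  obtain ⟨w, hw⟩ := hy.exists_valuation_aeval_eq (gaussValuation v hr)
    fun p => (gaussValuation_eq_zero_iff v hr).mp
  exact ⟨w, fun c => by simpa using hw (C c), by simpa using hw X⟩

end Transcendental

/-- **0-dimensional algebraic Lafforgue theorem.**
If `R` is a finitely generated `K`-algebra (with generators `T 1, …, T n`) over a
valued field `(K, v)`, and the set of tuples `(w (T 1), …, w (T n))` arising from
valuations (semi-valuations) `w : R → ℝ≥0` extending `v` is finite, then the set of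
`K`-algebra homomorphisms `R → K` is finite. -/
theorem finite_algHom_of_finite_tropicalization
    (K : Type*) [Field K] (v : Valuation K ℝ≥0)
    (R : Type*) [CommRing R] [Algebra K R]
    (n : ℕ) (T : Fin n → R)
    (hgen : Algebra.adjoin K (Set.range T) = ⊤)
    (hfin : {p : Fin n → ℝ≥0 | ∃ w : Valuation R ℝ≥0,
        (∀ c : K, w (algebraMap K R c) = v c) ∧ ∀ i, p i = w (T i)}.Finite) :
    Finite (R →ₐ[K] K) := by
  by_cases halg : ∀ i, IsIntegral K (T i)
  · have hfg := fg_adjoin_of_finite (Set.finite_range T) (by rintro _ ⟨i, rfl⟩; exact halg i)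
    rw [hgen, Algebra.top_toSubmodule] at hfg
    have : Module.Finite K R := ⟨hfg⟩
    infer_instance
  obtain ⟨i, hi⟩ := not_forall.mp halg
  have hy : Transcendental K (T i) := fun h => hi h.isIntegral
  have : Algebra.FiniteType K R := ⟨⟨(Set.finite_range T).toFinset, by simpa using hgen⟩⟩
  choose w hwv hwT using fun m : ℕ =>
    hy.exists_valuation_extension_eq v (r := m + 1) (by positivity)
  refine absurd hfin (Set.infinite_of_injective_forall_mem (f := fun m j => w m (T j)) ?_
    fun m => ⟨w m, hwv m, fun _ => rfl⟩)
  intro m m' h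
  simpa [hwT] using congrFun h i
end

section
/- Let K be a field equipped with a valuation v : K → ℝ≥0, and let R be a commutative K-algebra generated as a K-algebra by finitely many elements T₁, …, Tₙ. If the set { (w(T₁), …, w(Tₙ)) ∈ (ℝ≥0)ⁿ : w is a valuation on R (in the sense of Mathlib's Valuation R ℝ≥0) satisfying w(algebraMap K R c) = v(c) for all c ∈ K } is finite, then the Krull dimension of the ring R is at most 0. -/
/-!
If some prime `P` of `R` is not maximal, then `R ⧸ P` is a domain that is not a field, so it is
not algebraic over `K` and some generator `x = T j` is transcendental modulo `P`. For every
`t > 0` the Gauss valuation of `K[X]` with `X ↦ t` extends to `K(X) ⊆ Frac (R ⧸ P)`. The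
`K(X)`-subalgebra generated by `R ⧸ P` is of finite type, so by Zariski's lemma its residue
fields are finite over `K(X)`, and an `ℝ≥0`-valued valuation extends along any algebraic
extension of fields: by Chevalley's theorem there is a valuation ring above it, and since the
value group only grows by torsion, `n`-th roots in `ℝ≥0` turn it into an `ℝ≥0`-valued
valuation. Pulling back to `R` gives valuations extending `v` with `w (T j) = t` for all
`t > 0`, so the tropicalization is infinite.
-/

open scoped NNReal
open Polynomial

namespace Valuation

section Gauss

variable {K : Type*} [DivisionRing K]

noncomputable def toRealAbsoluteValue (v : Valuation K ℝ≥0) : AbsoluteValue K ℝ where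
  toFun c := v c
  map_mul' a b := by simp
  nonneg' c := (v c).coe_nonneg
  eq_zero' c := by simp
  add_le' a b := calc
    (v (a + b) : ℝ) ≤ max (v a : ℝ) (v b) := by exact_mod_cast v.map_add a b
    _ ≤ v a + v b := max_le_add_of_nonneg (v a).coe_nonneg (v b).coe_nonneg

theorem isNonarchimedean_toRealAbsoluteValue (v : Valuation K ℝ≥0) :
    IsNonarchimedean v.toRealAbsoluteValue := fun a b => by
  exact_mod_cast v.map_add a b

noncomputable def gauss (v : Valuation K ℝ≥0) {t : ℝ≥0} (ht : 0 < t) : Valuation K[X] ℝ≥0 where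
  toFun (p : K[X]) :=
    ⟨p.gaussNorm v.toRealAbsoluteValue t, p.gaussNorm_nonneg v.toRealAbsoluteValue t.coe_nonneg⟩
  map_zero' := by ext; exact gaussNorm_zero v.toRealAbsoluteValue (t : ℝ)
  map_one' := by ext; exact (gaussNorm_C _ _ 1).trans v.toRealAbsoluteValue.map_one
  map_mul' p q := by
    ext; exact gaussNorm_mul v.isNonarchimedean_toRealAbsoluteValue (by exact_mod_cast ht) p q
  map_add_le_max' p q := NNReal.coe_le_coe.mp <|
    isNonarchimedean_gaussNorm _ v.isNonarchimedean_toRealAbsoluteValue t.coe_nonneg p q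

variable (v : Valuation K ℝ≥0) {t : ℝ≥0} (ht : 0 < t)

theorem gauss_C (c : K) : v.gauss ht (C c) = v c := by
  ext; exact gaussNorm_C _ _ c

theorem gauss_X : v.gauss ht X = t := by
  ext
  have := gaussNorm_monomial v.toRealAbsoluteValue (t : ℝ) 1 (1 : K)
  rwa [monomial_one_one_eq_X, map_one, one_mul, pow_one] at this

theorem gauss_eq_zero_iff {p : K[X]} : v.gauss ht p = 0 ↔ p = 0 := by
  rw [← NNReal.coe_eq_zero]
  exact gaussNorm_eq_zero_iff _ _ (fun _ hx => v.toRealAbsoluteValue.eq_zero.mp hx)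
    (by exact_mod_cast ht)

end Gauss

theorem exists_ne_map_eq_of_sum_eq_zero {R Γ₀ ι : Type*} [Ring R]
    [LinearOrderedCommMonoidWithZero Γ₀] (v : Valuation R Γ₀) {s : Finset ι} {f : ι → R}
    (hsum : ∑ i ∈ s, f i = 0) (hs : ∃ i ∈ s, v (f i) ≠ 0) :
    ∃ i ∈ s, ∃ j ∈ s, i ≠ j ∧ v (f i) = v (f j) := by
  classical
  obtain ⟨i, hi, hne⟩ := hs
  obtain ⟨j, hj, hmax⟩ := s.exists_max_image (fun k => v (f k)) ⟨i, hi⟩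
  by_contra! hlt
  have := v.map_sum_eq_of_lt hj fun k hk => by
    obtain ⟨hks, hkj⟩ := Finset.mem_sdiff.mp hk
    exact lt_of_le_of_ne (hmax k hks) (hlt k hks j hj (by simpa using hkj))
  rw [hsum, map_zero] at this
  exact hne (le_antisymm (this ▸ hmax i hi) zero_le)

theorem exists_pow_eq_map_algebraMap_s1 {F L Γ₀ : Type*} [Field F] [CommRing L] [Algebra F L]
    [LinearOrderedCommGroupWithZero Γ₀] (V : Valuation L Γ₀) {b : L} (hb : IsAlgebraic F b) :
    ∃ n ≠ 0, ∃ c : F, V b ^ n = V (algebraMap F L c) := by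
  rcases eq_or_ne (V b) 0 with hb0 | hb0
  · exact ⟨1, one_ne_zero, 0, by simp [hb0]⟩
  obtain ⟨P, hP0, hPb⟩ := hb
  have hcomap (c : F) : V (algebraMap F L c) = V.comap (algebraMap F L) c := rfl
  have hterm : ∀ i ∈ P.support, V (algebraMap F L (P.coeff i) * b ^ i) ≠ 0 := fun i hi => by
    rw [map_mul, map_pow, hcomap]
    exact mul_ne_zero ((ne_zero_iff _).mpr (mem_support_iff.mp hi)) (pow_ne_zero _ hb0)
  have hsum : ∑ i ∈ P.support, algebraMap F L (P.coeff i) * b ^ i = 0 := by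
    rwa [aeval_def, eval₂_eq_sum, Polynomial.sum_def] at hPb
  obtain ⟨i, hi, j, hj, hij, heq⟩ := V.exists_ne_map_eq_of_sum_eq_zero hsum
    (P.support_nonempty.mpr hP0 |>.elim fun i hi => ⟨i, hi, hterm i hi⟩)
  wlog hlt : i < j generalizing i j
  · exact this j hj i hi hij.symm heq.symm (lt_of_le_of_ne (not_lt.mp hlt) hij.symm)
  refine ⟨j - i, by omega, P.coeff i / P.coeff j, ?_⟩
  have hcj : V (algebraMap F L (P.coeff j)) ≠ 0 :=
    (ne_zero_iff (V.comap (algebraMap F L))).mpr (mem_support_iff.mp hj)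
  rw [hcomap, map_div₀, ← hcomap, ← hcomap, eq_div_iff hcj]
  rw [map_mul, map_mul, map_pow, map_pow, ← Nat.sub_add_cancel hlt.le, pow_add,
    Nat.sub_add_cancel hlt.le] at heq
  exact mul_right_cancel₀ (pow_ne_zero i hb0) (by rw [heq]; ac_rfl)

section RootExtend

variable {A B Γ₀ : Type*} [CommRing A] [CommRing B] [LinearOrderedCommMonoidWithZero Γ₀]
  {V : Valuation B Γ₀} {f : A →+* B} (w : Valuation A ℝ≥0)
  (htors : ∀ b, ∃ n ≠ 0, ∃ a, V b ^ n = V (f a))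

/-- Once `V.comap f` is equivalent to `w`, this does not depend on the chosen `n` and `a`
(`rootExtendFun_pow_eq`). -/
noncomputable def rootExtendFun (b : B) : ℝ≥0 :=
  w (htors b).choose_spec.2.choose ^ ((htors b).choose : ℝ)⁻¹

include htors in
theorem exists_common_pow_eq (b c : B) :
    ∃ n ≠ 0, ∃ a a', V b ^ n = V (f a) ∧ V c ^ n = V (f a') := by
  obtain ⟨n, hn, a, ha⟩ := htors b
  obtain ⟨m, hm, a', ha'⟩ := htors c
  refine ⟨n * m, mul_ne_zero hn hm, a ^ m, a' ^ n, ?_, ?_⟩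
  · rw [map_pow, map_pow, pow_mul, ha]
  · rw [map_pow, map_pow, mul_comm, pow_mul, ha']

variable {w} (hequiv : (V.comap f).IsEquiv w)
include hequiv

theorem rootExtendFun_pow_eq {b : B} {n : ℕ} {a : A} (h : V b ^ n = V (f a)) :
    rootExtendFun w htors b ^ n = w a := by
  set n₀ := (htors b).choose
  set a₀ := (htors b).choose_spec.2.choose
  have hn₀ : n₀ ≠ 0 := (htors b).choose_spec.1
  have h₀ : V b ^ n₀ = V (f a₀) := (htors b).choose_spec.2.choose_spec
  have hroot : rootExtendFun w htors b ^ n₀ = w a₀ := NNReal.rpow_inv_natCast_pow _ hn₀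
  have hcross : w (a ^ n₀) = w (a₀ ^ n) := hequiv.eq_iff.mp <| by
    simp only [comap_apply, map_pow]
    rw [← h, ← h₀, ← pow_mul, ← pow_mul, mul_comm]
  rw [map_pow, map_pow] at hcross
  refine (pow_left_inj₀ zero_le zero_le hn₀).mp ?_
  rw [← pow_mul, mul_comm, pow_mul, hroot, hcross]

theorem rootExtendFun_map (a : A) : rootExtendFun w htors (f a) = w a := by
  simpa using rootExtendFun_pow_eq htors hequiv (pow_one (V (f a)))

theorem rootExtendFun_mul (b c : B) :
    rootExtendFun w htors (b * c) = rootExtendFun w htors b * rootExtendFun w htors c := by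
  obtain ⟨n, hn, a, a', ha, ha'⟩ := exists_common_pow_eq htors b c
  have hbc : V (b * c) ^ n = V (f (a * a')) := by rw [map_mul, mul_pow, ha, ha', map_mul, map_mul]
  refine (pow_left_inj₀ zero_le zero_le hn).mp ?_
  rw [mul_pow, rootExtendFun_pow_eq htors hequiv ha, rootExtendFun_pow_eq htors hequiv ha',
    rootExtendFun_pow_eq htors hequiv hbc, map_mul]

theorem rootExtendFun_mono {b c : B} (h : V b ≤ V c) :
    rootExtendFun w htors b ≤ rootExtendFun w htors c := by
  obtain ⟨n, hn, a, a', ha, ha'⟩ := exists_common_pow_eq htors b c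
  refine (pow_le_pow_iff_left₀ zero_le zero_le hn).mp ?_
  rw [rootExtendFun_pow_eq htors hequiv ha, rootExtendFun_pow_eq htors hequiv ha']
  exact hequiv.le_iff_le.mp (ha ▸ ha' ▸ pow_le_pow_left' h n)

noncomputable def rootExtend : Valuation B ℝ≥0 where
  toFun := rootExtendFun w htors
  map_zero' := by simpa using rootExtendFun_map htors hequiv 0
  map_one' := by simpa using rootExtendFun_map htors hequiv 1
  map_mul' := rootExtendFun_mul htors hequiv
  map_add_le_max' b c := by
    rcases max_choice (V b) (V c) with h | h
    · exact (rootExtendFun_mono htors hequiv (h ▸ V.map_add b c)).trans (le_max_left _ _)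
    · exact (rootExtendFun_mono htors hequiv (h ▸ V.map_add b c)).trans (le_max_right _ _)

theorem comap_rootExtend : (rootExtend htors hequiv).comap f = w :=
  Valuation.ext (rootExtendFun_map htors hequiv)

end RootExtend

end Valuation

/-- A valuation ring of `L` dominating the image of `O` meets `F` in a valuation ring dominating
`O`, hence in `O` itself. -/
theorem ValuationSubring.exists_comap_eq {F L : Type*} [Field F] [Field L] (f : F →+* L)
    (O : ValuationSubring F) : ∃ B : ValuationSubring L, B.comap f = O := by
  obtain ⟨B, hB, hloc⟩ := IsLocalRing.exists_factor_valuationRing (f.comp O.subtype)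
  refine ⟨B, le_antisymm (fun a (ha : f a ∈ B) => ?_) fun a ha => hB ⟨a, ha⟩⟩
  by_contra haO
  have ha0 : a ≠ 0 := fun h => haO (h ▸ O.zero_mem)
  have hinv : a⁻¹ ∈ O := (O.mem_or_inv_mem a).resolve_left haO
  have hunit : IsUnit ((f.comp O.subtype).codRestrict B.toSubring hB ⟨a⁻¹, hinv⟩) :=
    IsUnit.of_mul_eq_one (⟨f a, ha⟩ : B) (Subtype.ext (by simp [ha0]))
  obtain ⟨b, hb⟩ := isUnit_iff_exists_inv.mp (hloc.map_nonunit _ hunit)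
  have hab : a = b := by simpa [inv_mul_eq_one₀ ha0] using congrArg Subtype.val hb
  exact haO (hab ▸ b.2)

namespace Valuation

theorem exists_comap_algebraMap_eq {F L : Type*} [Field F] [Field L] [Algebra F L]
    [Algebra.IsAlgebraic F L] (w : Valuation F ℝ≥0) :
    ∃ W : Valuation L ℝ≥0, W.comap (algebraMap F L) = w := by
  obtain ⟨B, hB⟩ := ValuationSubring.exists_comap_eq (algebraMap F L) w.valuationSubring
  have hequiv : (B.valuation.comap (algebraMap F L)).IsEquiv w := by
    rw [isEquiv_iff_valuationSubring, ← hB]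
    ext a
    simp [mem_valuationSubring_iff, ValuationSubring.valuation_le_one_iff]
  exact ⟨_, comap_rootExtend
    (fun b => B.valuation.exists_pow_eq_map_algebraMap_s1 (Algebra.IsAlgebraic.isAlgebraic b)) hequiv⟩

theorem exists_comap_algebraMap_eq_of_finiteType {F B : Type*} [Field F] [CommRing B]
    [Nontrivial B] [Algebra F B] [Algebra.FiniteType F B] (w : Valuation F ℝ≥0) :
    ∃ W : Valuation B ℝ≥0, W.comap (algebraMap F B) = w := by
  obtain ⟨m, hm⟩ := Ideal.exists_maximal B
  let := Ideal.Quotient.field m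
  have : Algebra.FiniteType F (B ⧸ m) :=
    .of_surjective (Ideal.Quotient.mkₐ F m) (Ideal.Quotient.mkₐ_surjective F m)
  -- Zariski's lemma
  have := finite_of_finite_type_of_isJacobsonRing F (B ⧸ m)
  obtain ⟨W, hW⟩ := exists_comap_algebraMap_eq (L := B ⧸ m) w
  exact ⟨W.comap (Ideal.Quotient.mk m), hW⟩

theorem exists_map_aeval_eq_of_transcendental {K A : Type*} [Field K] [CommRing A] [IsDomain A]
    [Algebra K A] [Algebra.FiniteType K A] {x : A} (hx : Transcendental K x)
    (w : Valuation (FractionRing K[X]) ℝ≥0) :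
    ∃ W : Valuation A ℝ≥0, ∀ p : K[X], W (aeval x p) = w (algebraMap K[X] _ p) := by
  let ι : A →+* FractionRing A := algebraMap A _
  have hψ : Function.Injective (ι.comp (aeval x).toRingHom) :=
    (IsFractionRing.injective A _).comp (transcendental_iff_injective.mp hx)
  let : Algebra (FractionRing K[X]) (FractionRing A) := (IsFractionRing.lift hψ).toAlgebra
  have hιaeval (p : K[X]) :
      ι (aeval x p) = algebraMap (FractionRing K[X]) (FractionRing A) (algebraMap K[X] _ p) :=
    (IsFractionRing.lift_algebraMap hψ p).symm
  obtain ⟨s, hs⟩ := Algebra.FiniteType.out (R := K) (A := A)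
  let B := Algebra.adjoin (FractionRing K[X]) (ι '' s)
  have hB (a : A) : ι a ∈ B := by
    have ha : a ∈ Algebra.adjoin K (s : Set A) := hs ▸ Algebra.mem_top
    induction ha using Algebra.adjoin_induction with
    | mem a ha => exact Algebra.subset_adjoin ⟨a, ha, rfl⟩
    | algebraMap c =>
      rw [← aeval_C x c, hιaeval]
      exact B.algebraMap_mem _
    | add a b _ _ ha hb => simpa using add_mem ha hb
    | mul a b _ _ ha hb => simpa using mul_mem ha hb
  have : Algebra.FiniteType (FractionRing K[X]) B := .adjoin_of_finite (s.finite_toSet.image _)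
  obtain ⟨W, hW⟩ := exists_comap_algebraMap_eq_of_finiteType (B := B) w
  refine ⟨W.comap (ι.codRestrict B.toSubring hB), fun p => ?_⟩
  rw [← hW, comap_apply, comap_apply]
  exact congrArg W (Subtype.ext (hιaeval p))

theorem exists_extension_apply_eq_of_transcendental {K A : Type*} [Field K] [CommRing A]
    [IsDomain A] [Algebra K A] [Algebra.FiniteType K A] (v : Valuation K ℝ≥0) {x : A}
    (hx : Transcendental K x) {t : ℝ≥0} (ht : 0 < t) :
    ∃ w : Valuation A ℝ≥0, (∀ c, w (algebraMap K A c) = v c) ∧ w x = t := by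
  have hS : nonZeroDivisors K[X] ≤ (v.gauss ht).supp.primeCompl := fun p hp =>
    (v.gauss_eq_zero_iff ht).not.mpr (nonZeroDivisors.ne_zero hp)
  obtain ⟨w, hw⟩ := exists_map_aeval_eq_of_transcendental hx
    ((v.gauss ht).extendToLocalization hS (FractionRing K[X]))
  refine ⟨w, fun c => ?_, ?_⟩
  · rw [← aeval_C x c, hw, extendToLocalization_apply_map_apply, gauss_C]
  · rw [← aeval_X (R := K) x, hw, extendToLocalization_apply_map_apply, gauss_X]

end Valuation

theorem exists_transcendental_of_not_isField {K A ι : Type*} [Field K] [CommRing A] [IsDomain A]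
    [Algebra K A] {T : ι → A} (hgen : Algebra.adjoin K (Set.range T) = ⊤) (hA : ¬IsField A) :
    ∃ i, Transcendental K (T i) := by
  by_contra! h
  have : Algebra.IsIntegral K A := integralClosure_eq_top_iff.mp <| eq_top_iff.mpr <|
    hgen ▸ Algebra.adjoin_le (Set.range_subset_iff.mpr fun i => (not_not.mp (h i)).isIntegral)
  exact hA (isField_of_isIntegral_of_isField' (Field.toIsField K))

/-- **0-dimensional Bieri–Groves bound on the Krull dimension.**
If `R` is a finitely generated `K`-algebra (with generators `T 1, …, T n`) over a
valued field `(K, v)`, and the set of tuples `(w (T 1), …, w (T n))` arising from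
valuations (semi-valuations) `w : R → ℝ≥0` extending `v` is finite, then `R` has
Krull dimension at most `0`. -/
theorem ringKrullDim_le_zero_of_finite_tropicalization
    (K : Type*) [Field K] (v : Valuation K ℝ≥0)
    (R : Type*) [CommRing R] [Algebra K R]
    (n : ℕ) (T : Fin n → R)
    (hgen : Algebra.adjoin K (Set.range T) = ⊤)
    (hfin : {p : Fin n → ℝ≥0 | ∃ w : Valuation R ℝ≥0,
        (∀ c : K, w (algebraMap K R c) = v c) ∧ ∀ i, p i = w (T i)}.Finite) :
    ringKrullDim R ≤ 0 := by
  rw [← Nat.cast_zero, ← Ring.krullDimLE_iff]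
  refine Ring.KrullDimLE.mk₀ fun P hP => ?_
  by_contra hPmax
  have : Algebra.FiniteType K R := ⟨Subalgebra.fg_def.mpr ⟨_, Set.finite_range T, hgen⟩⟩
  have hgenP : Algebra.adjoin K (Set.range (Ideal.Quotient.mkₐ K P ∘ T)) = ⊤ := by
    rw [Set.range_comp, Algebra.adjoin_image, hgen, Algebra.map_top, AlgHom.range_eq_top]
    exact Ideal.Quotient.mkₐ_surjective K P
  obtain ⟨j, hj⟩ := exists_transcendental_of_not_isField hgenP
    (mt (Ideal.Quotient.maximal_ideal_iff_isField_quotient P).mpr hPmax)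
  refine (Set.Ioi_infinite (0 : ℝ≥0)).mono (fun t ht => ?_) (hfin.image fun p => p j)
  obtain ⟨w, hwK, hwT⟩ := v.exists_extension_apply_eq_of_transcendental hj ht
  exact ⟨_, ⟨w.comap (Ideal.Quotient.mk P), hwK, fun i => rfl⟩, hwT⟩
end

section
/- Let K be an algebraically closed field equipped with a nontrivial valuation v : K → ℝ≥0 (i.e., there is c ∈ K with c ≠ 0 and v(c) ≠ 1). Let f : R → S be a homomorphism of commutative K-algebras, where R and S are each generated as K-algebras by finitely many elements, with chosen generators U₁, …, Uₙ of S. Let x : R → K be a K-algebra homomorphism. If the set { (w(U₁), …, w(Uₙ)) ∈ (ℝ≥0)ⁿ : w is a valuation on S (in the sense of Mathlib's Valuation S ℝ≥0) satisfying w(f(r)) = v(x(r)) for all r ∈ R } is finite, then the set { y : S → K : y is a K-algebra homomorphism with y ∘ f = x } is finite. -/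
/-!
If the fiber were infinite, some generator `U i` would take infinitely many values on it, so its
image `u` in the fiber algebra `A = S ⧸ f (ker x)` is transcendental over `K`. Modulo a suitable
prime, `A` becomes a finitely generated domain `B` in which `u` stays transcendental. Then `B` is
torsion-free, hence flat, over the PID `K[u]`, so by going down and Chevalley's theorem the image of
`Spec B` in the affine line is a nonempty open set: for all but finitely many `a ∈ K`, `u - a` is
not a unit of `B`, and by the Nullstellensatz `u` takes the value `a` at some `K`-point of `A`.
Composing these points with `v` gives valuations `w` on `S` with `w ∘ f = v ∘ x` whose values
`w (U i)` form an infinite set, because a nontrivial valuation takes infinitely many values on any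
cofinite subset of `K`.
-/

open scoped NNReal

open Polynomial

theorem PrimeSpectrum.isOpen_range_comap_of_isTorsionFree {R B : Type*} [CommRing R]
    [IsDedekindDomain R] [CommRing B] [Algebra R B] [Module.IsTorsionFree R B]
    [Algebra.FiniteType R B] : IsOpen (Set.range (comap (algebraMap R B))) :=
  have : Algebra.FinitePresentation R B := Algebra.FinitePresentation.of_finiteType.mp ‹_›
  isOpenMap_comap_of_hasGoingDown_of_finitePresentation.isOpen_range

noncomputable def Polynomial.evalPrimeSpectrum {K : Type*} [Field K] (a : K) : PrimeSpectrum K[X] :=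
  ⟨RingHom.ker (evalRingHom a), RingHom.ker_isPrime _⟩

theorem PrimeSpectrum.finite_setOf_evalPrimeSpectrum_notMem {K : Type*} [Field K]
    {U : Set (PrimeSpectrum K[X])} (hU : IsOpen U) (hne : U.Nonempty) :
    {a : K | evalPrimeSpectrum a ∉ U}.Finite := by
  obtain ⟨p, hp⟩ := hne
  obtain ⟨_, ⟨g, rfl⟩, hpg, hgU⟩ := isTopologicalBasis_basic_opens.exists_subset_of_mem_open hp hU
  have hg : g ≠ 0 := by
    rintro rfl
    simp at hpg
  refine (finite_setOfPred_isRoot hg).subset fun a ha => ?_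
  by_contra hroot
  exact ha (hgU ((mem_basicOpen g _).mpr hroot))

theorem finite_setOf_isUnit_algebraMap_X_sub_C {K B : Type*} [Field K] [CommRing B] [IsDomain B]
    [Algebra K[X] B] [FaithfulSMul K[X] B] [Algebra.FiniteType K[X] B] :
    {a : K | IsUnit (algebraMap K[X] B (X - C a))}.Finite := by
  refine (PrimeSpectrum.finite_setOf_evalPrimeSpectrum_notMem
    (PrimeSpectrum.isOpen_range_comap_of_isTorsionFree (B := B)) ?_).subset ?_
  · obtain ⟨P⟩ : Nonempty (PrimeSpectrum B) := inferInstance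
    exact ⟨_, P, rfl⟩
  · rintro a ha ⟨P, hP⟩
    have : X - C a ∈ (PrimeSpectrum.comap (algebraMap K[X] B) P).asIdeal := by
      rw [hP]
      simp [evalPrimeSpectrum]
    exact P.2.ne_top (Ideal.eq_top_of_isUnit_mem _ this ha)

theorem exists_isPrime_transcendental_mk {R A : Type*} [CommRing R] [IsDomain R] [CommRing A]
    [Algebra R A] {u : A} (hu : Transcendental R u) :
    ∃ p : Ideal A, p.IsPrime ∧ Transcendental R (Ideal.Quotient.mk p u) := by
  set M := (nonZeroDivisors R[X]).map (aeval u)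
  have hM : Disjoint ((⊥ : Ideal A) : Set A) M := by
    rw [Submodule.bot_coe, Set.disjoint_singleton_left]
    rintro ⟨g, hg, hgu⟩
    exact nonZeroDivisors.ne_zero hg (transcendental_iff.mp hu g hgu)
  obtain ⟨p, hp, -, hpM⟩ := Ideal.exists_le_prime_disjoint ⊥ M hM
  refine ⟨p, hp, transcendental_iff.mpr fun g hg => by_contra fun hg0 => ?_⟩
  have hgp : aeval u g ∈ p := by
    rwa [← Ideal.Quotient.eq_zero_iff_mem, ← Ideal.Quotient.mkₐ_eq_mk R, ← aeval_algHom_apply]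
  exact Set.disjoint_left.mp hpM hgp ⟨g, mem_nonZeroDivisors_of_ne_zero hg0, rfl⟩

theorem exists_algHom_apply_eq_zero_of_not_isUnit {K B : Type*} [Field K] [IsAlgClosed K]
    [CommRing B] [Algebra K B] [Algebra.FiniteType K B] {b : B} (hb : ¬IsUnit b) :
    ∃ φ : B →ₐ[K] K, φ b = 0 := by
  obtain ⟨m, hm, hbm⟩ := exists_max_ideal_of_mem_nonunits hb
  let _ : Field (B ⧸ m) := Ideal.Quotient.field m
  have : Algebra.FiniteType K (B ⧸ m) := .of_surjective _ (Ideal.Quotient.mkₐ_surjective K m)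
  have : Module.Finite K (B ⧸ m) := finite_of_finite_type_of_isJacobsonRing K (B ⧸ m)
  refine ⟨IsAlgClosed.lift.comp (Ideal.Quotient.mkₐ K m), ?_⟩
  simp [Ideal.Quotient.eq_zero_iff_mem.mpr hbm]

theorem finite_setOf_isUnit_sub_algebraMap {K B : Type*} [Field K] [CommRing B] [IsDomain B]
    [Algebra K B] [Algebra.FiniteType K B] {u : B} (hu : Transcendental K u) :
    {a : K | IsUnit (u - algebraMap K B a)}.Finite := by
  let _ : Algebra K[X] B := (aeval u).toAlgebra
  have : IsScalarTower K K[X] B := .of_algebraMap_eq fun a => (aeval_C u a).symm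
  have : FaithfulSMul K[X] B :=
    (faithfulSMul_iff_algebraMap_injective _ _).mpr (transcendental_iff_injective.mp hu)
  have : Algebra.FiniteType K[X] B := .of_restrictScalars_finiteType K K[X] B
  convert finite_setOf_isUnit_algebraMap_X_sub_C (K := K) (B := B) using 4 with a
  simp [RingHom.algebraMap_toAlgebra]

theorem finite_compl_range_eval_of_transcendental {K A : Type*} [Field K] [IsAlgClosed K]
    [CommRing A] [Algebra K A] [Algebra.FiniteType K A] {u : A} (hu : Transcendental K u) :
    (Set.range fun φ : A →ₐ[K] K => φ u)ᶜ.Finite := by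
  obtain ⟨p, hp, hup⟩ := exists_isPrime_transcendental_mk hu
  have : Algebra.FiniteType K (A ⧸ p) :=
    .of_surjective (Ideal.Quotient.mkₐ K p) (Ideal.Quotient.mkₐ_surjective K p)
  refine (finite_setOf_isUnit_sub_algebraMap hup).subset fun a ha => by_contra fun hunit => ha ?_
  obtain ⟨φ, hφ⟩ := exists_algHom_apply_eq_zero_of_not_isUnit (K := K) hunit
  refine ⟨φ.comp (Ideal.Quotient.mkₐ K p), ?_⟩
  simpa [sub_eq_zero] using hφ

theorem transcendental_of_infinite_range_eval {K A B : Type*} [CommRing K] [IsDomain K]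
    [CommRing A] [Algebra K A] [CommRing B] [IsDomain B] [Algebra K B] [Module.IsTorsionFree K B]
    {u : A} (h : (Set.range fun φ : A →ₐ[K] B => φ u).Infinite) : Transcendental K u := by
  refine transcendental_iff.mpr fun g hg => by_contra fun hg0 => h ?_
  have hg0' : g.map (algebraMap K B) ≠ 0 :=
    (Polynomial.map_ne_zero_iff (FaithfulSMul.algebraMap_injective K B)).mpr hg0
  refine (finite_setOfPred_isRoot hg0').subset ?_
  rintro _ ⟨φ, rfl⟩
  simp [eval_map_algebraMap, aeval_algHom_apply, hg]

theorem exists_infinite_range_eval_of_adjoin_eq_top {K A B ι : Type*} [CommSemiring K]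
    [Semiring A] [Algebra K A] [Semiring B] [Algebra K B] [Finite ι] {U : ι → A}
    (hU : Algebra.adjoin K (Set.range U) = ⊤) [Infinite (A →ₐ[K] B)] :
    ∃ i, (Set.range fun φ : A →ₐ[K] B => φ (U i)).Infinite := by
  by_contra! h
  have hinj : Function.Injective fun (φ : A →ₐ[K] B) i => φ (U i) := fun φ ψ hφψ =>
    AlgHom.ext_of_adjoin_eq_top hU (by rintro _ ⟨i, rfl⟩; exact congrFun hφψ i)
  have : Finite (A →ₐ[K] B) := (Set.finite_range_iff hinj).mp <| (Set.Finite.pi h).subset <| by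
    rintro _ ⟨φ, rfl⟩ i -
    exact ⟨φ, rfl⟩
  exact not_finite (A →ₐ[K] B)

theorem Valuation.infinite_image_of_finite_compl {K Γ₀ : Type*} [Field K]
    [LinearOrderedCommGroupWithZero Γ₀] (v : Valuation K Γ₀) {c : K} (hc0 : c ≠ 0) (hc1 : v c ≠ 1)
    {s : Set K} (hs : sᶜ.Finite) : (v '' s).Infinite := by
  have hpow : (Set.range fun k : ℕ => v c ^ k).Infinite :=
    Set.infinite_range_of_injective <|
      pow_right_injective₀ (zero_lt_iff.mpr (v.ne_zero_iff.mpr hc0)) hc1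
  refine fun hfin => hpow ((hfin.union (hs.image v)).subset ?_)
  rintro _ ⟨k, rfl⟩
  rw [← Set.image_union, Set.union_compl_self]
  exact ⟨c ^ k, trivial, map_pow v c k⟩

theorem AlgHom.comp_eq_iff_map_ker_le {K R S : Type*} [CommRing K] [CommRing R] [Algebra K R]
    [CommRing S] [Algebra K S] (y : S →ₐ[K] K) (f : R →ₐ[K] S) (x : R →ₐ[K] K) :
    y.comp f = x ↔ (RingHom.ker x).map f ≤ RingHom.ker y := by
  refine ⟨fun h => Ideal.map_le_iff_le_comap.mpr fun r hr => ?_, fun h => AlgHom.ext fun r => ?_⟩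
  · simpa [← h] using hr
  · have hr : r - algebraMap K R (x r) ∈ RingHom.ker x := by simp
    simpa [sub_eq_zero] using h (Ideal.mem_map_of_mem f hr)

theorem setOf_comp_eq_eq_range_comp_mkₐ {K R S : Type*} [CommRing K] [CommRing R] [Algebra K R]
    [CommRing S] [Algebra K S] (f : R →ₐ[K] S) (x : R →ₐ[K] K) :
    {y : S →ₐ[K] K | y.comp f = x} =
      Set.range fun φ : S ⧸ (RingHom.ker x).map f →ₐ[K] K =>
        φ.comp (Ideal.Quotient.mkₐ K ((RingHom.ker x).map f)) := by
  ext y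
  refine ⟨fun h => ⟨Ideal.Quotient.liftₐ _ y ((y.comp_eq_iff_map_ker_le f x).mp h),
    AlgHom.ext fun s => rfl⟩, ?_⟩
  rintro ⟨φ, rfl⟩
  refine ((φ.comp _).comp_eq_iff_map_ker_le f x).mpr fun s hs => ?_
  simp [Ideal.Quotient.eq_zero_iff_mem.mpr hs]

theorem finite_fiber_of_finite_tropical_fiber_general
    (K : Type*) [Field K] [IsAlgClosed K] (v : Valuation K ℝ≥0)
    (hv : ∃ c : K, c ≠ 0 ∧ v c ≠ 1)
    (R S : Type*) [CommRing R] [Algebra K R] [CommRing S] [Algebra K S]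
    (n : ℕ) (U : Fin n → S) (hgenS : Algebra.adjoin K (Set.range U) = ⊤)
    (f : R →ₐ[K] S) (x : R →ₐ[K] K)
    (hfin : {p : Fin n → ℝ≥0 | ∃ w : Valuation S ℝ≥0,
        (∀ r : R, w (f r) = v (x r)) ∧ ∀ i, p i = w (U i)}.Finite) :
    {y : S →ₐ[K] K | y.comp f = x}.Finite := by
  set J := (RingHom.ker x).map f
  set π := Ideal.Quotient.mkₐ K J
  have hfiber := setOf_comp_eq_eq_range_comp_mkₐ f x
  by_contra hinf
  have : Infinite (S ⧸ J →ₐ[K] K) :=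
    not_finite_iff_infinite.mp fun _ => hinf (hfiber ▸ Set.finite_range _)
  have hgen : Algebra.adjoin K (Set.range (π ∘ U)) = ⊤ := by
    rw [Set.range_comp, Algebra.adjoin_image, hgenS, Algebra.map_top,
      (AlgHom.range_eq_top _).mpr (Ideal.Quotient.mkₐ_surjective _ _)]
  have : Algebra.FiniteType K (S ⧸ J) :=
    ⟨⟨(Set.finite_range _).toFinset, by simpa using hgen⟩⟩
  obtain ⟨i, hi⟩ := exists_infinite_range_eval_of_adjoin_eq_top (B := K) hgen
  obtain ⟨c, hc0, hc1⟩ := hv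
  refine v.infinite_image_of_finite_compl hc0 hc1
    (finite_compl_range_eval_of_transcendental (transcendental_of_infinite_range_eval (B := K) hi))
    ((hfin.image fun p => p i).subset ?_)
  rintro _ ⟨_, ⟨φ, rfl⟩, rfl⟩
  have hφ : φ.comp π ∈ {y : S →ₐ[K] K | y.comp f = x} := hfiber ▸ ⟨φ, rfl⟩
  exact ⟨_, ⟨v.comap (φ.comp π).toRingHom, fun r => by simp [← hφ.out], fun j => rfl⟩, rfl⟩

/-- **0-dimensional relative Lafforgue theorem.**
Let `K` be an algebraically closed field with a nontrivial valuation `v`, and let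
`f : R → S` be a homomorphism of finitely generated commutative `K`-algebras, with
chosen generators `U 1, …, U n` of `S`. If for a `K`-algebra homomorphism `x : R → K`
the set of tuples `(w (U 1), …, w (U n))` arising from valuations (semi-valuations)
`w : S → ℝ≥0` with `w ∘ f = v ∘ x` is finite, then the set of `K`-algebra
homomorphisms `y : S → K` with `y ∘ f = x` is finite. -/
theorem finite_fiber_of_finite_tropical_fiber
    (K : Type*) [Field K] [IsAlgClosed K] (v : Valuation K ℝ≥0)
    (hv : ∃ c : K, c ≠ 0 ∧ v c ≠ 1)
    (R S : Type*) [CommRing R] [Algebra K R] [CommRing S] [Algebra K S]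
    (m : ℕ) (T : Fin m → R) (hgenR : Algebra.adjoin K (Set.range T) = ⊤)
    (n : ℕ) (U : Fin n → S) (hgenS : Algebra.adjoin K (Set.range U) = ⊤)
    (f : R →ₐ[K] S) (x : R →ₐ[K] K)
    (hfin : {p : Fin n → ℝ≥0 | ∃ w : Valuation S ℝ≥0,
        (∀ r : R, w (f r) = v (x r)) ∧ ∀ i, p i = w (U i)}.Finite) :
    {y : S →ₐ[K] K | y.comp f = x}.Finite :=
  finite_fiber_of_finite_tropical_fiber_general K v hv R S n U hgenS f x hfin
end

section
/- Let E be a finite type and M a matroid on E whose ground set is all of E. Define p : Finset E → WithBot ℝ by p I = 0 if I is a base of M and p I = ⊥ otherwise. Then p is a valuation on M; equivalently, for all bases A, B of M and every a ∈ A \ B there exists b ∈ B \ A such that both (A \ {a}) ∪ {b} and (B \ {b}) ∪ {a} are bases of M (symmetric basis exchange). -/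
/-! The exchange element `b` is taken from the intersection of the fundamental circuit of `a`
with respect to `B` and the fundamental cocircuit of `a` with respect to `A`. Both contain `a`,
and a circuit never meets a cocircuit in a single element, so there is such a `b ≠ a`. Membership
in the fundamental circuit makes `B - b + a` a base; by the duality between fundamental circuits
and cocircuits, membership in the fundamental cocircuit makes `A - a + b` a base. -/

variable {E : Type*}

/-- A valuation on a matroid `M` (Dress–Wenzel valuated matroid structure on `M`):
a function `p : Finset E → WithBot ℝ` whose support is exactly the set of bases of `M`,
satisfying the tropical Plücker (exchange) relations. -/
def Matroid.IsValuation [DecidableEq E] (M : Matroid E) (p : Finset E → WithBot ℝ) : Prop :=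
  (∀ I : Finset E, p I ≠ ⊥ ↔ M.IsBase ↑I) ∧
    ∀ A B : Finset E, M.IsBase ↑A → M.IsBase ↑B → ∀ a ∈ A \ B, ∃ b ∈ B \ A,
      p A + p B ≤ p ((A \ {a}) ∪ {b}) + p ((B \ {b}) ∪ {a})

namespace Matroid

open Set

variable {α : Type*} {M : Matroid α} {A B : Set α} {a e f : α}

lemma IsBase.exchange_isBase_of_mem_fundCircuit (hB : M.IsBase B) (heE : e ∈ M.E) (heB : e ∉ B)
    (hfB : f ∈ B) (hf : f ∈ M.fundCircuit e B) : M.IsBase (insert e (B \ {f})) := by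
  rw [insert_sdiff_singleton_comm (ne_of_mem_of_not_mem hfB heB).symm]
  exact hB.exchange_isBase_of_indep' hfB heB
    ((hB.indep.mem_fundCircuit_iff (by rwa [hB.closure_eq]) heB).1 hf)

theorem IsBase.exists_symm_exchange (hA : M.IsBase A) (hB : M.IsBase B) (ha : a ∈ A \ B) :
    ∃ b ∈ B \ A, M.IsBase (insert b (A \ {a})) ∧ M.IsBase (insert a (B \ {b})) := by
  obtain ⟨haA, haB⟩ := ha
  have haE : a ∈ M.E := hA.subset_ground haA
  have hC : M.IsCircuit (M.fundCircuit a B) := hB.fundCircuit_isCircuit haE haB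
  have hK : M.IsCocircuit (M.fundCocircuit a A) := M.fundCocircuit_isCocircuit haA hA
  obtain ⟨b, ⟨hbC, hbK⟩, hba⟩ := (hC.isCocircuit_inter_nontrivial hK
    ⟨a, M.mem_fundCircuit a B, M.mem_fundCocircuit a A⟩).exists_ne a
  have hbB : b ∈ B := by simpa [hba] using M.fundCircuit_subset_insert a B hbC
  have hbA : b ∈ M.E \ A := by simpa [hba] using M.fundCocircuit_subset_insert_compl a A hbK
  exact ⟨b, ⟨hbB, hbA.2⟩,
    hA.exchange_isBase_of_mem_fundCircuit hbA.1 hbA.2 haA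
      (hA.mem_fundCocircuit_iff_mem_fundCircuit.1 hbK),
    hB.exchange_isBase_of_mem_fundCircuit haE haB hbB hbC⟩

end Matroid

theorem Matroid.isValuation_trivial_general [DecidableEq E]
    (M : Matroid E)
    (p : Finset E → WithBot ℝ)
    (hp₁ : ∀ I : Finset E, M.IsBase ↑I → p I = 0)
    (hp₂ : ∀ I : Finset E, ¬ M.IsBase ↑I → p I = ⊥) :
    M.IsValuation p := by
  refine ⟨fun I ↦ ⟨fun h ↦ by_contra fun hI ↦ h (hp₂ I hI), fun h ↦ by simp [hp₁ I h]⟩, ?_⟩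
  intro A B hA hB a ha
  rw [Finset.mem_sdiff] at ha
  obtain ⟨b, ⟨hbB, hbA⟩, hA', hB'⟩ := hA.exists_symm_exchange hB ha
  refine ⟨b, Finset.mem_sdiff.2 ⟨hbB, hbA⟩, le_of_eq ?_⟩
  rw [hp₁ A hA, hp₁ B hB, hp₁ _ (by simpa [Set.union_singleton] using hA'),
    hp₁ _ (by simpa [Set.union_singleton] using hB')]

/-- **The trivial tropical representation of a matroid.** The function sending each base
to `0` and every other finset to `⊥` is a valuation on `M`; this amounts to the symmetric
basis exchange property. -/
theorem Matroid.isValuation_trivial [Fintype E] [DecidableEq E]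
    (M : Matroid E) (hE : M.E = Set.univ)
    (p : Finset E → WithBot ℝ)
    (hp₁ : ∀ I : Finset E, M.IsBase ↑I → p I = 0)
    (hp₂ : ∀ I : Finset E, ¬ M.IsBase ↑I → p I = ⊥) :
    M.IsValuation p :=
  Matroid.isValuation_trivial_general M p hp₁ hp₂
end

section
/- Let K be an infinite field. Then there is no finite set Φ of functions Fin 4 → (Fin 2 → K) with the following property: every function φ : Fin 4 → (Fin 2 → K) such that for all i ≠ j in Fin 4 the pair of vectors φ i, φ j is linearly independent over K, is projectively equivalent to some element of Φ. In other words, the uniform matroid U_{2,4} has infinitely many projective equivalence classes of representations over every infinite field. -/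
/-!
The cross-ratio of four vectors in `K²`, built from the `2 × 2` determinants `[φ i, φ j]`, is
unchanged when every vector is rescaled and a linear automorphism is applied: each bracket
picks up the factor `c i * c j * det A`, and these factors cancel between numerator and
denominator. The representation `e₀, e₁, e₀ + e₁, e₀ + t e₁` of `U_{2,4}` has cross-ratio `t`,
so a set of representatives of all classes must have infinitely many distinct cross-ratios.
-/

open Matrix

section PairDet

variable {K : Type*}

def pairDet [CommRing K] (v w : Fin 2 → K) : K :=
  (Matrix.of ![v, w]).det

lemma pairDet_eq [CommRing K] (v w : Fin 2 → K) : pairDet v w = v 0 * w 1 - v 1 * w 0 := by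
  simp [pairDet, det_fin_two]

lemma pairDet_map [CommRing K] (A : (Fin 2 → K) →ₗ[K] (Fin 2 → K)) (v w : Fin 2 → K) :
    pairDet (A v) (A w) = LinearMap.det A * pairDet v w := by
  have h := (Pi.basisFun K (Fin 2)).det_comp A ![v, w]
  rw [Pi.basisFun_det_apply, Pi.basisFun_det_apply] at h
  unfold pairDet
  convert h using 3
  ext i : 1
  fin_cases i <;> rfl

lemma pairDet_smul_map [CommRing K] (A : (Fin 2 → K) →ₗ[K] (Fin 2 → K)) (a b : K)
    (v w : Fin 2 → K) :
    pairDet (a • A v) (b • A w) = a * b * LinearMap.det A * pairDet v w := by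
  have hsmul : ∀ x y : Fin 2 → K, pairDet (a • x) (b • y) = a * b * pairDet x y := by
    intro x y
    simp only [pairDet_eq, Pi.smul_apply, smul_eq_mul]
    ring
  rw [hsmul, pairDet_map, mul_assoc (a * b)]

lemma linearIndependent_pair_iff_pairDet_ne_zero [Field K] (v w : Fin 2 → K) :
    LinearIndependent K ![v, w] ↔ pairDet v w ≠ 0 := by
  have h := linearIndependent_rows_iff_isUnit (A := Matrix.of ![v, w])
  rw [isUnit_iff_isUnit_det, isUnit_iff_ne_zero] at h
  exact h

end PairDet

section CrossRatio

variable {K : Type*} [Field K]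

def crossRatio (φ : Fin 4 → Fin 2 → K) : K :=
  pairDet (φ 0) (φ 3) * pairDet (φ 1) (φ 2) / (pairDet (φ 0) (φ 2) * pairDet (φ 1) (φ 3))

lemma crossRatio_smul_map (c : Fin 4 → Kˣ) (A : (Fin 2 → K) ≃ₗ[K] (Fin 2 → K))
    (ψ : Fin 4 → Fin 2 → K) :
    crossRatio (fun i => c i • A (ψ i)) = crossRatio ψ := by
  set d := LinearMap.det (A : (Fin 2 → K) →ₗ[K] (Fin 2 → K))
  have hdet : d ≠ 0 := (LinearEquiv.isUnit_det' A).ne_zero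
  have hk : (c 0 * c 1 * c 2 * c 3 * d ^ 2 : K) ≠ 0 := by simp [hdet]
  simp only [crossRatio, Units.smul_def, ← LinearEquiv.coe_coe, pairDet_smul_map]
  calc _ = (c 0 * c 1 * c 2 * c 3 * d ^ 2 : K) * (pairDet (ψ 0) (ψ 3) * pairDet (ψ 1) (ψ 2)) /
        ((c 0 * c 1 * c 2 * c 3 * d ^ 2 : K) * (pairDet (ψ 0) (ψ 2) * pairDet (ψ 1) (ψ 3))) := by
        ring
    _ = _ := mul_div_mul_left _ _ hk

def u24Rep (t : K) : Fin 4 → Fin 2 → K :=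
  ![![1, 0], ![0, 1], ![1, 1], ![1, t]]

lemma crossRatio_u24Rep (t : K) : crossRatio (u24Rep t) = t := by
  simp [crossRatio, u24Rep, pairDet_eq]

lemma u24Rep_linearIndependent {t : K} (ht₀ : t ≠ 0) (ht₁ : t ≠ 1) {i j : Fin 4} (hij : i ≠ j) :
    LinearIndependent K ![u24Rep t i, u24Rep t j] := by
  rw [linearIndependent_pair_iff_pairDet_ne_zero, pairDet_eq]
  have ht₁' : t - 1 ≠ 0 := sub_ne_zero.mpr ht₁
  have ht₁'' : 1 - t ≠ 0 := sub_ne_zero.mpr ht₁.symm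
  fin_cases i <;> fin_cases j <;> simp_all [u24Rep]

end CrossRatio

/-- **`U_{2,4}` has infinitely many projective classes of representations over any
infinite field**: no finite set `Φ` of families of four vectors in `K²` meets every
projective equivalence class of representations of `U_{2,4}` over `K`. -/
theorem U24_infinitely_many_representations
    (K : Type*) [Field K] [Infinite K] :
    ¬ ∃ Φ : Set (Fin 4 → (Fin 2 → K)), Φ.Finite ∧
      ∀ φ : Fin 4 → (Fin 2 → K),
        (∀ i j : Fin 4, i ≠ j → LinearIndependent K ![φ i, φ j]) →
        ∃ ψ ∈ Φ, ∃ (A : (Fin 2 → K) ≃ₗ[K] (Fin 2 → K)) (c : Fin 4 → Kˣ),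
          ∀ i, φ i = c i • A (ψ i) := by
  rintro ⟨Φ, hΦ, hrep⟩
  have hcover : ({0, 1} : Set K)ᶜ ⊆ crossRatio '' Φ := by
    intro t ht
    simp only [Set.mem_compl_iff, Set.mem_insert_iff, Set.mem_singleton_iff, not_or] at ht
    obtain ⟨ψ, hψ, A, c, h⟩ :=
      hrep (u24Rep t) fun i j hij => u24Rep_linearIndependent ht.1 ht.2 hij
    refine ⟨ψ, hψ, ?_⟩
    rw [← crossRatio_smul_map c A ψ, ← funext h, crossRatio_u24Rep]
  exact (Set.toFinite ({0, 1} : Set K)).infinite_compl ((hΦ.image crossRatio).subset hcover)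
end
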